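/- Let a₁, …, a_m ∈ ℝ³ be constant unit vectors, let k₁, …, k_m ≥ 0, let ω : ℝ → ℝ³, and let b₁, …, b_m : ℝ → ℝ³ be differentiable functions with ‖b_j(t)‖ = 1 for all t and satisfying b_j′(t) = b_j(t) × ω(t). Define e(t) = Σ_{j=1}^m k_j (a_j × b_j(t)). Then e is differentiable and ‖e′(t)‖ ≤ (Σ_{j=1}^m k_j) ‖ω(t)‖ for all t. -/

import Mathlib

open Matrix

/-- The cross product on `ℝ³` with the Euclidean structure. -/
noncomputable def cross3 (x y : EuclideanSpace ℝ (Fin 3)) : EuclideanSpace ℝ (Fin 3) :=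
  (WithLp.equiv 2 (Fin 3 → ℝ)).symm
    (crossProduct ((WithLp.equiv 2 (Fin 3 → ℝ)) x) ((WithLp.equiv 2 (Fin 3 → ℝ)) y))

/-- The left cross product as a continuous linear map. -/
noncomputable def cross3L (x : EuclideanSpace ℝ (Fin 3)) :
    EuclideanSpace ℝ (Fin 3) →L[ℝ] EuclideanSpace ℝ (Fin 3) :=
  LinearMap.toContinuousLinearMap
    (((WithLp.linearEquiv 2 ℝ (Fin 3 → ℝ)).symm.toLinearMap.comp
        (crossProduct ((WithLp.equiv 2 (Fin 3 → ℝ)) x))).comp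
      (WithLp.linearEquiv 2 ℝ (Fin 3 → ℝ)).toLinearMap)

lemma cross3L_apply (x y : EuclideanSpace ℝ (Fin 3)) : cross3L x y = cross3 x y := rfl

lemma norm_cross3_le (x y : EuclideanSpace ℝ (Fin 3)) : ‖cross3 x y‖ ≤ ‖x‖ * ‖y‖ := by
  have h1 : 0 ≤ ‖x‖ * ‖y‖ := mul_nonneg (norm_nonneg _) (norm_nonneg _)
  rw [← Real.sqrt_sq (norm_nonneg (cross3 x y)), ← Real.sqrt_sq h1]
  apply Real.sqrt_le_sqrt
  have hx := EuclideanSpace.norm_eq x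
  have hy := EuclideanSpace.norm_eq y
  have hc := EuclideanSpace.norm_eq (cross3 x y)
  rw [hc]
  rw [Real.sq_sqrt (by positivity)]
  simp only [Real.norm_eq_abs, sq_abs] at *
  have : (‖x‖ * ‖y‖) ^ 2 = (∑ i, x i ^ 2) * (∑ i, y i ^ 2) := by
    rw [mul_pow, hx, hy, Real.sq_sqrt (by positivity), Real.sq_sqrt (by positivity)]
  rw [this]
  have hcoord : ∀ i, (cross3 x y) i = (crossProduct (fun i => x i) (fun i => y i)) i := by
    intro i; rfl
  simp only [Fin.sum_univ_three]
  rw [hcoord 0, hcoord 1, hcoord 2]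
  simp only [crossProduct, LinearMap.mk₂_apply]
  simp only [Matrix.cons_val_zero, Matrix.cons_val_one, Matrix.head_cons,
    Matrix.cons_val_two, Matrix.tail_cons]
  nlinarith [sq_nonneg (x 0 * y 0 + x 1 * y 1 + x 2 * y 2), sq_nonneg (x 0 * y 1 - x 1 * y 0),
    sq_nonneg (x 0 * y 2 - x 2 * y 0), sq_nonneg (x 1 * y 2 - x 2 * y 1)]

/-- For constant unit vectors `a j`, nonnegative weights `k j`, and unit
direction curves `b j` with `b j′ = b j × ω`, the error vector
`e(t) = ∑ j, k j (a j × b j t)` is differentiable and `‖e′(t)‖ ≤ (∑ j, k j) ‖ω(t)‖`. -/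
theorem deriv_error_vector_bound
    (m : ℕ) (a : Fin m → EuclideanSpace ℝ (Fin 3)) (ha : ∀ j, ‖a j‖ = 1)
    (k : Fin m → ℝ) (hk : ∀ j, 0 ≤ k j)
    (ω : ℝ → EuclideanSpace ℝ (Fin 3))
    (b : Fin m → ℝ → EuclideanSpace ℝ (Fin 3))
    (hbunit : ∀ j t, ‖b j t‖ = 1)
    (hb : ∀ j t, HasDerivAt (b j) (cross3 (b j t) (ω t)) t) :
    Differentiable ℝ (fun t => ∑ j, k j • cross3 (a j) (b j t)) ∧
    ∀ t : ℝ, ‖deriv (fun t => ∑ j, k j • cross3 (a j) (b j t)) t‖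
      ≤ (∑ j, k j) * ‖ω t‖ := by
  have key : ∀ t, HasDerivAt (fun t => ∑ j, k j • cross3 (a j) (b j t))
      (∑ j, k j • cross3 (a j) (cross3 (b j t) (ω t))) t := by
    intro t
    apply HasDerivAt.fun_sum
    intro j _
    have h1 : HasDerivAt (fun t => cross3 (a j) (b j t))
        (cross3 (a j) (cross3 (b j t) (ω t))) t := by
      have := (cross3L (a j)).hasFDerivAt.comp_hasDerivAt t (hb j t)
      exact this
    exact h1.const_smul (k j)
  constructor
  · exact fun t => (key t).differentiableAt
  · intro t
    rw [(key t).deriv]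
    calc ‖∑ j, k j • cross3 (a j) (cross3 (b j t) (ω t))‖
        ≤ ∑ j, ‖k j • cross3 (a j) (cross3 (b j t) (ω t))‖ := norm_sum_le _ _
      _ ≤ ∑ j, k j * ‖ω t‖ := by
          apply Finset.sum_le_sum
          intro j _
          rw [norm_smul, Real.norm_eq_abs, abs_of_nonneg (hk j)]
          apply mul_le_mul_of_nonneg_left _ (hk j)
          calc ‖cross3 (a j) (cross3 (b j t) (ω t))‖
              ≤ ‖a j‖ * ‖cross3 (b j t) (ω t)‖ := norm_cross3_le _ _
            _ ≤ ‖a j‖ * (‖b j t‖ * ‖ω t‖) := by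
                apply mul_le_mul_of_nonneg_left (norm_cross3_le _ _) (norm_nonneg _)
            _ = ‖ω t‖ := by rw [ha j, hbunit j t]; ring
      _ = (∑ j, k j) * ‖ω t‖ := by rw [Finset.sum_mul]
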